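/- (Corollary 2, Backward Regression for subset selection.) Let Φ be a real n×m matrix with full column rank and let σ > 0 satisfy σ‖v‖₂ ≤ ‖Φv‖₂ for all v ∈ ℝ^m. Let y ∈ ℝ^n be arbitrary, let x* be a minimizer of ‖y − Φz‖₂ over all z ∈ ℝ^m with at most k nonzero entries, let S = supp(x*) (assume |S| = k ≥ 1), and let r = y − Φx*. If (σ/2)·min_{i∈S}|x*_i| > ‖r‖₂, then for every index set A with S ⊆ A ⊆ {1,…,m}, every i ∈ S and every j ∈ A \ S: (min over z with supp(z) ⊆ A \ {j} of ‖y − Φz‖₂) < (min over z with supp(z) ⊆ A \ {i} of ‖y − Φz‖₂); hence Backward Regression run for m − k steps returns the support S. -/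

import Mathlib

open Matrix

/-- The Euclidean (ℓ₂) norm of a finitely indexed real vector. -/
noncomputable def euclNorm {ι : Type*} [Fintype ι] (v : ι → ℝ) : ℝ :=
  ‖(WithLp.equiv 2 (ι → ℝ)).symm v‖

/-- The restricted least-squares residual norm: the infimum of `‖y − Φz‖₂` over
vectors `z` supported inside the index set `B`. -/
noncomputable def resNorm {n m : ℕ} (Φ : Matrix (Fin n) (Fin m) ℝ)
    (y : Fin n → ℝ) (B : Finset (Fin m)) : ℝ :=
  sInf {c : ℝ | ∃ z : Fin m → ℝ, (∀ l, z l ≠ 0 → l ∈ B) ∧ c = euclNorm (y - Φ.mulVec z)}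

/-- `z` has at most `k` nonzero entries. -/
def KSparse {m : ℕ} (k : ℕ) (z : Fin m → ℝ) : Prop :=
  ∃ T : Finset (Fin m), T.card ≤ k ∧ ∀ l, z l ≠ 0 → l ∈ T

/-! The `j`-deletion keeps the support `S` of `xstar`, so its residual is at most `‖r‖₂`.
Any competitor `z` for the `i`-deletion has `z i = 0`, so `σ |xstar i| ≤ σ ‖xstar - z‖₂ ≤
‖Φ (xstar - z)‖₂ ≤ ‖y - Φ z‖₂ + ‖r‖₂`, i.e. its residual is at least `σ |xstar i| - ‖r‖₂`,
which exceeds `‖r‖₂` under the noise condition. -/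

section EuclNorm

variable {ι : Type*} [Fintype ι]

lemma euclNorm_nonneg (v : ι → ℝ) : 0 ≤ euclNorm v :=
  norm_nonneg _

lemma euclNorm_sub_le (a b : ι → ℝ) : euclNorm (a - b) ≤ euclNorm a + euclNorm b :=
  norm_sub_le (WithLp.toLp 2 a) (WithLp.toLp 2 b)

lemma abs_apply_le_euclNorm (v : ι → ℝ) (i : ι) : |v i| ≤ euclNorm v :=
  PiLp.norm_apply_le (WithLp.toLp 2 v) i

end EuclNorm

section ResNorm

variable {n m : ℕ} (Φ : Matrix (Fin n) (Fin m) ℝ) (y : Fin n → ℝ) {B : Finset (Fin m)}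

lemma resNorm_le_of_support_subset {z : Fin m → ℝ} (hz : ∀ l, z l ≠ 0 → l ∈ B) :
    resNorm Φ y B ≤ euclNorm (y - Φ *ᵥ z) :=
  csInf_le ⟨0, by rintro c ⟨w, -, rfl⟩; exact euclNorm_nonneg _⟩ ⟨z, hz, rfl⟩

lemma le_resNorm {c : ℝ}
    (hc : ∀ z : Fin m → ℝ, (∀ l, z l ≠ 0 → l ∈ B) → c ≤ euclNorm (y - Φ *ᵥ z)) :
    c ≤ resNorm Φ y B :=
  le_csInf ⟨_, 0, fun _ h => absurd rfl h, rfl⟩ (by rintro _ ⟨z, hz, rfl⟩; exact hc z hz)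

lemma sub_euclNorm_le_resNorm_of_notMem {σ : ℝ} (hσ : 0 ≤ σ)
    (hlow : ∀ v : Fin m → ℝ, σ * euclNorm v ≤ euclNorm (Φ *ᵥ v))
    (x : Fin m → ℝ) {i : Fin m} (hi : i ∉ B) :
    σ * |x i| - euclNorm (y - Φ *ᵥ x) ≤ resNorm Φ y B := by
  refine le_resNorm Φ y fun z hz => ?_
  have hzi : z i = 0 := not_imp_comm.mp (hz i) hi
  have hdiff : Φ *ᵥ (x - z) = (y - Φ *ᵥ z) - (y - Φ *ᵥ x) := by
    rw [mulVec_sub]; abel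
  calc σ * |x i| - euclNorm (y - Φ *ᵥ x)
      ≤ σ * euclNorm (x - z) - euclNorm (y - Φ *ᵥ x) := by
        gcongr
        simpa [hzi] using abs_apply_le_euclNorm (x - z) i
    _ ≤ euclNorm (Φ *ᵥ (x - z)) - euclNorm (y - Φ *ᵥ x) := by gcongr; exact hlow _
    _ ≤ euclNorm (y - Φ *ᵥ z) := by
        rw [hdiff]; linarith [euclNorm_sub_le (y - Φ *ᵥ z) (y - Φ *ᵥ x)]

end ResNorm

theorem backward_regression_subset_selection_general {n m : ℕ}
    (Φ : Matrix (Fin n) (Fin m) ℝ)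
    (σ : ℝ) (hσ : 0 < σ)
    (hlow : ∀ v : Fin m → ℝ, σ * euclNorm v ≤ euclNorm (Φ.mulVec v))
    (y : Fin n → ℝ)
    (xstar : Fin m → ℝ)
    (S : Finset (Fin m)) (hS : ∀ i, i ∈ S ↔ xstar i ≠ 0)
    (hne : S.Nonempty)
    (r : Fin n → ℝ) (hr : r = y - Φ.mulVec xstar)
    (hnoise : σ / 2 * S.inf' hne (fun l => |xstar l|) > euclNorm r) :
    ∀ A : Finset (Fin m), S ⊆ A →
      ∀ i ∈ S, ∀ j ∈ A \ S,
        resNorm Φ y (A.erase j) < resNorm Φ y (A.erase i) := by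
  intro A hSA i hi j hj
  obtain ⟨-, hjS⟩ := Finset.mem_sdiff.mp hj
  have hkeep : resNorm Φ y (A.erase j) ≤ euclNorm r := hr ▸
    resNorm_le_of_support_subset Φ y fun l hl =>
      have hlS := (hS l).mpr hl
      Finset.mem_erase.mpr ⟨ne_of_mem_of_not_mem hlS hjS, hSA hlS⟩
  have hdrop :=
    sub_euclNorm_le_resNorm_of_notMem Φ y hσ.le hlow xstar (Finset.notMem_erase i A)
  have hmin : σ * S.inf' hne (fun l => |xstar l|) ≤ σ * |xstar i| :=
    mul_le_mul_of_nonneg_left (Finset.inf'_le _ hi) hσ.le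
  rw [← hr] at hdrop
  linarith

/-- Corollary 2, Backward Regression for subset selection.
Let `xstar` solve the subset selection problem with sparsity `k`, with support `S`
of cardinality `k ≥ 1` and residual `r = y − Φ xstar`. If `(σ/2)·min_{i∈S}|xstar i| > ‖r‖₂`,
then for every active set `A ⊇ S`, every `i ∈ S` and `j ∈ A \ S`, deleting `j` yields a
strictly smaller restricted residual than deleting `i`; hence Backward Regression run
for `m − k` steps returns `S`. -/
theorem backward_regression_subset_selection {n m : ℕ}
    (Φ : Matrix (Fin n) (Fin m) ℝ)
    (hΦ : Function.Injective Φ.mulVec)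
    (σ : ℝ) (hσ : 0 < σ)
    (hlow : ∀ v : Fin m → ℝ, σ * euclNorm v ≤ euclNorm (Φ.mulVec v))
    (y : Fin n → ℝ) (k : ℕ) (hk : 1 ≤ k)
    (xstar : Fin m → ℝ)
    (hxstar_sparse : KSparse k xstar)
    (hxstar_min : ∀ z : Fin m → ℝ, KSparse k z →
      euclNorm (y - Φ.mulVec xstar) ≤ euclNorm (y - Φ.mulVec z))
    (S : Finset (Fin m)) (hS : ∀ i, i ∈ S ↔ xstar i ≠ 0)
    (hScard : S.card = k) (hne : S.Nonempty)
    (r : Fin n → ℝ) (hr : r = y - Φ.mulVec xstar)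
    (hnoise : σ / 2 * S.inf' hne (fun l => |xstar l|) > euclNorm r) :
    ∀ A : Finset (Fin m), S ⊆ A →
      ∀ i ∈ S, ∀ j ∈ A \ S,
        resNorm Φ y (A.erase j) < resNorm Φ y (A.erase i) :=
  backward_regression_subset_selection_general Φ σ hσ hlow y xstar S hS hne r hr hnoise
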